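/- Let T be a binary tree structure whose root is an internal node with left subtree structure T_l and right subtree structure T_r, and let c ≥ 1 and m > L_T. Then the c-partitioning function of T on ℝ^ℓ satisfies π^c_T(m) ≤ (1/2)^{δ} · Σ_{k=L_{T_l}}^{m−L_{T_r}} min{2ℓ, C(m,k)} · Σ_{1 ≤ a,b ≤ c, a+b ≥ c} C(a, c−b) · C(b, c−a) · (a+b−c)! · π^a_{T_l}(k) · π^b_{T_r}(m−k), where δ = 1 if the tree structures T_l and T_r are equal and δ = 0 otherwise, and C denotes the binomial coefficient. -/

import Mathlib

/-- A `c`-partition of a finite set `S`: a set of `c` pairwise disjoint nonempty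
subsets (parts) whose union is `S`. -/
def IsPartition {α : Type*} (S : Finset α) (c : ℕ) (P : Finset (Finset α)) : Prop :=
  P.card = c ∧ (∀ p ∈ P, p.Nonempty) ∧
    (∀ p ∈ P, ∀ q ∈ P, p ≠ q → Disjoint p q) ∧ (∀ x, x ∈ S ↔ ∃ p ∈ P, x ∈ p)

/-- A binary tree structure: either a leaf, or an internal node with a left and a
right subtree structure. -/
inductive TreeStruct : Type where
  | leaf : TreeStruct
  | node : TreeStruct → TreeStruct → TreeStruct
deriving DecidableEq

namespace TreeStruct

/-- The number of leaves of a binary tree structure. -/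
def leaves : TreeStruct → ℕ
  | leaf => 1
  | node l r => l.leaves + r.leaves

/-- The number of internal nodes of a binary tree structure. -/
def internals : TreeStruct → ℕ
  | leaf => 0
  | node l r => l.internals + r.internals + 1

end TreeStruct

/-- A decision tree on `ℝ^ℓ` with labels in `Y`: every leaf carries a label and every
internal node carries a decision rule `(i, θ, s)` with feature `i`, threshold `θ` and
sign `s` (`true` codes `+1`, `false` codes `-1`). -/
inductive DTree (ℓ : ℕ) (Y : Type) : Type where
  | leaf : Y → DTree ℓ Y
  | node : Fin ℓ → ℝ → Bool → DTree ℓ Y → DTree ℓ Y → DTree ℓ Y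

namespace DTree

/-- The output of a decision tree on an example `x`: at a node with rule `(i, θ, s)`,
`x` is sent to the left subtree if `sign (x^i - θ) = s` (i.e. `(θ < x^i) = s`) and to
the right subtree otherwise. -/
noncomputable def eval {ℓ : ℕ} {Y : Type} : DTree ℓ Y → (Fin ℓ → ℝ) → Y
  | leaf y, _ => y
  | node i θ s l r, x => if decide (θ < x i) = s then l.eval x else r.eval x

/-- The underlying structure of a decision tree. -/
def shape {ℓ : ℕ} {Y : Type} : DTree ℓ Y → TreeStruct
  | leaf _ => .leaf
  | node _ _ _ l r => .node l.shape r.shape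

end DTree

/-- A partition `P` of a sample `S ⊆ ℝ^ℓ` is realizable by the class of decision trees
with structure `T` if there is a decision tree `t` with structure `T` (labels in `ℕ`)
such that two points of `S` lie in the same part of `P` iff `t` outputs the same label
on them. -/
def TreeRealizable (ℓ : ℕ) (T : TreeStruct) (S : Finset (Fin ℓ → ℝ))
    (P : Finset (Finset (Fin ℓ → ℝ))) : Prop :=
  ∃ t : DTree ℓ ℕ, t.shape = T ∧
    ∀ x ∈ S, ∀ y ∈ S, ((∃ p ∈ P, x ∈ p ∧ y ∈ p) ↔ t.eval x = t.eval y)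

/-- `PartSet ℓ T a S` : the set of `a`-partitions of `S` realizable by the tree class `T`. -/
def PartSet (ℓ : ℕ) (T : TreeStruct) (a : ℕ) (S : Finset (Fin ℓ → ℝ)) :
    Set (Finset (Finset (Fin ℓ → ℝ))) :=
  {P | IsPartition S a P ∧ TreeRealizable ℓ T S P}

/-- The `a`-partitioning function of the tree class `T` on `ℝ^ℓ`: the largest number of
distinct `a`-partitions realizable by `T` on a sample of `m` points. -/
noncomputable def treePi (ℓ : ℕ) (T : TreeStruct) (a m : ℕ) : ℕ :=
  sSup {n : ℕ | ∃ S : Finset (Fin ℓ → ℝ), S.card = m ∧ n = (PartSet ℓ T a S).ncard}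


/-!
Perturbing the sample into general position only increases the number of realizable
partitions. Then the root rule `(i, θ, s)` of a tree realizing a `c`-partition `P` sends to the
left a top set of the sample for the key `±x^i`, and moving this cut to the top set `A` of the
nearest admissible size `k ∈ [L_{T_l}, m - L_{T_r}]` keeps both restrictions `P|A` and
`P|(S \ A)` realizable by the subtrees. The partition `P` is recovered from `A`, the two
restrictions, with `a` and `b` parts, and the matching between the parts of `P|A` and
`P|(S \ A)` that come from a common part of `P`; this matching has `a + b - c` edges, so there
are at most `C(a, c - b) C(b, c - a) (a + b - c)!` of them, and there are at most
`min (2ℓ, C(m, k))` top sets of size `k`. If `T_l = T_r`, mirroring the root gives a second cut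
for every `P`, which yields the factor `2`.
-/

open Finset

section Partitions

variable {α : Type*}

def SamePart (P : Finset (Finset α)) (x y : α) : Prop :=
  ∃ p ∈ P, x ∈ p ∧ y ∈ p

namespace IsPartition

variable {S : Finset α} {c : ℕ} {P : Finset (Finset α)}

theorem subset (hP : IsPartition S c P) {p : Finset α} (hp : p ∈ P) : p ⊆ S :=
  fun x hx => (hP.2.2.2 x).2 ⟨p, hp, hx⟩

theorem exists_mem (hP : IsPartition S c P) {x : α} (hx : x ∈ S) : ∃ p ∈ P, x ∈ p :=
  (hP.2.2.2 x).1 hx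

theorem eq_of_mem (hP : IsPartition S c P) {p q : Finset α} (hp : p ∈ P) (hq : q ∈ P) {x : α}
    (hxp : x ∈ p) (hxq : x ∈ q) : p = q := by
  by_contra hne
  exact disjoint_left.1 (hP.2.2.1 p hp q hq hne) hxp hxq

open Classical in
theorem filter_samePart_eq (hP : IsPartition S c P) {p : Finset α} (hp : p ∈ P) {x : α}
    (hx : x ∈ p) : {y ∈ S | SamePart P x y} = p := by
  ext y
  rw [mem_filter]
  constructor
  · rintro ⟨-, q, hq, hxq, hyq⟩
    rwa [hP.eq_of_mem hp hq hx hxq]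
  · exact fun hy => ⟨hP.subset hp hy, p, hp, hx, hy⟩

open Classical in
theorem eq_image_filter_samePart (hP : IsPartition S c P) :
    P = S.image fun x => {y ∈ S | SamePart P x y} := by
  ext p
  simp only [mem_image]
  constructor
  · intro hp
    obtain ⟨x, hx⟩ := hP.2.1 p hp
    exact ⟨x, hP.subset hp hx, hP.filter_samePart_eq hp hx⟩
  · rintro ⟨x, hx, rfl⟩
    obtain ⟨p, hp, hxp⟩ := hP.exists_mem hx
    rwa [hP.filter_samePart_eq hp hxp]

open Classical in
theorem ext_samePart {c' : ℕ} {P' : Finset (Finset α)} (hP : IsPartition S c P)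
    (hP' : IsPartition S c' P') (h : ∀ x ∈ S, ∀ y ∈ S, SamePart P x y ↔ SamePart P' x y) :
    P = P' := by
  rw [hP.eq_image_filter_samePart, hP'.eq_image_filter_samePart]
  exact image_congr fun x hx => filter_congr fun y hy => h x hx y hy

open Classical in
theorem exists_label (hP : IsPartition S c P) :
    ∃ f : α → ℕ, ∀ x ∈ S, ∀ y ∈ S, SamePart P x y ↔ f x = f y := by
  have hmem : ∀ x ∈ S, {y ∈ S | SamePart P x y} ∈ P := fun x hx => by
    obtain ⟨p, hp, hxp⟩ := hP.exists_mem hx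
    rwa [hP.filter_samePart_eq hp hxp]
  refine ⟨fun x => P.toList.idxOf {y ∈ S | SamePart P x y}, fun x hx y hy => ?_⟩
  rw [List.idxOf_inj (mem_toList.2 (hmem x hx))]
  constructor
  · rintro ⟨p, hp, hxp, hyp⟩
    rw [hP.filter_samePart_eq hp hxp, hP.filter_samePart_eq hp hyp]
  · intro h
    obtain ⟨p, hp, hyp⟩ := hP.exists_mem hy
    have : y ∈ {z ∈ S | SamePart P y z} := mem_filter.2 ⟨hy, p, hp, hyp, hyp⟩
    exact (mem_filter.1 (h ▸ this)).2

end IsPartition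

theorem IsPartition.image {β : Type*} [DecidableEq β] {S : Finset α} {c : ℕ}
    {P : Finset (Finset α)} {g : α → β} (hP : IsPartition S c P) (hg : Set.InjOn g S) :
    IsPartition (S.image g) c (P.image (Finset.image g)) := by
  have hinj : Set.InjOn (Finset.image g) P := (image_injOn_powerset_of_injOn hg).mono
    fun p hp => mem_coe.2 (mem_powerset.2 (hP.subset hp))
  refine ⟨(card_image_of_injOn hinj).trans hP.1, ?_, ?_, fun z => ?_⟩
  · intro q hq
    obtain ⟨p, hp, rfl⟩ := mem_image.1 hq
    exact (hP.2.1 p hp).image g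
  · intro q hq q' hq' hne
    obtain ⟨p, hp, rfl⟩ := mem_image.1 hq
    obtain ⟨p', hp', rfl⟩ := mem_image.1 hq'
    refine disjoint_left.2 fun z hz hz' => ?_
    obtain ⟨x, hx, rfl⟩ := mem_image.1 hz
    obtain ⟨x', hx', hxx'⟩ := mem_image.1 hz'
    rw [hg (hP.subset hp' hx') (hP.subset hp hx) hxx'] at hx'
    exact hne (congrArg _ (hP.eq_of_mem hp hp' hx hx'))
  · constructor
    · intro hz
      obtain ⟨x, hx, rfl⟩ := mem_image.1 hz
      obtain ⟨p, hp, hxp⟩ := hP.exists_mem hx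
      exact ⟨p.image g, mem_image_of_mem _ hp, mem_image_of_mem g hxp⟩
    · rintro ⟨q, hq, hzq⟩
      obtain ⟨p, hp, rfl⟩ := mem_image.1 hq
      obtain ⟨x, hxp, rfl⟩ := mem_image.1 hzq
      exact mem_image_of_mem g (hP.subset hp hxp)

theorem samePart_image_iff {β : Type*} [DecidableEq β] {S : Finset α} {P : Finset (Finset α)}
    {g : α → β} (hg : Set.InjOn g S) (hP : ∀ p ∈ P, p ⊆ S) {x y : α} (hx : x ∈ S) (hy : y ∈ S) :
    SamePart (P.image (Finset.image g)) (g x) (g y) ↔ SamePart P x y := by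
  have hmem : ∀ p ∈ P, ∀ z ∈ S, g z ∈ p.image g ↔ z ∈ p := fun p hp z hz => by
    rw [← mem_coe, coe_image, hg.mem_image_iff (hP p hp) hz, mem_coe]
  constructor
  · rintro ⟨_, hq, hxq, hyq⟩
    obtain ⟨p, hp, rfl⟩ := mem_image.1 hq
    exact ⟨p, hp, (hmem p hp x hx).1 hxq, (hmem p hp y hy).1 hyq⟩
  · rintro ⟨p, hp, hxp, hyp⟩
    exact ⟨p.image g, mem_image_of_mem _ hp, mem_image_of_mem g hxp, mem_image_of_mem g hyp⟩

variable [DecidableEq α]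

def restrictParts (P : Finset (Finset α)) (A : Finset α) : Finset (Finset α) :=
  {p ∈ P | (p ∩ A).Nonempty}.image (· ∩ A)

def crossingPairs (P : Finset (Finset α)) (A B : Finset α) : Finset (Finset α × Finset α) :=
  {p ∈ P | (p ∩ A).Nonempty ∧ (p ∩ B).Nonempty}.image fun p => (p ∩ A, p ∩ B)

theorem SamePart.of_restrictParts {P : Finset (Finset α)} {A : Finset α} {x y : α}
    (h : SamePart (restrictParts P A) x y) : SamePart P x y := by
  obtain ⟨q, hq, hx, hy⟩ := h
  obtain ⟨p, hp, rfl⟩ := mem_image.1 hq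
  exact ⟨p, (mem_filter.1 hp).1, (mem_inter.1 hx).1, (mem_inter.1 hy).1⟩

theorem samePart_restrictParts_iff {P : Finset (Finset α)} {A : Finset α} {x y : α}
    (hx : x ∈ A) (hy : y ∈ A) : SamePart (restrictParts P A) x y ↔ SamePart P x y := by
  refine ⟨SamePart.of_restrictParts, fun ⟨p, hp, hxp, hyp⟩ => ⟨p ∩ A, ?_, ?_, ?_⟩⟩
  · exact mem_image.2 ⟨p, mem_filter.2 ⟨hp, x, mem_inter.2 ⟨hxp, hx⟩⟩, rfl⟩
  · exact mem_inter.2 ⟨hxp, hx⟩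
  · exact mem_inter.2 ⟨hyp, hy⟩

theorem samePart_iff_of_mem {S A : Finset α} {P : Finset (Finset α)} {x y : α}
    (hx : x ∈ S) (hy : y ∈ S) :
    SamePart P x y ↔ SamePart (restrictParts P A) x y ∨ SamePart (restrictParts P (S \ A)) x y ∨
      ∃ z ∈ crossingPairs P A (S \ A), x ∈ z.1 ∧ y ∈ z.2 ∨ y ∈ z.1 ∧ x ∈ z.2 := by
  constructor
  · rintro ⟨p, hp, hxp, hyp⟩
    have hcross : ∀ {u v}, u ∈ A → v ∈ S \ A → u ∈ p → v ∈ p →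
        (p ∩ A, p ∩ (S \ A)) ∈ crossingPairs P A (S \ A) := fun hu hv hup hvp =>
      mem_image.2 ⟨p, mem_filter.2 ⟨hp, ⟨_, mem_inter.2 ⟨hup, hu⟩⟩, ⟨_, mem_inter.2 ⟨hvp, hv⟩⟩⟩,
        rfl⟩
    by_cases hxA : x ∈ A <;> by_cases hyA : y ∈ A
    · exact .inl ((samePart_restrictParts_iff hxA hyA).2 ⟨p, hp, hxp, hyp⟩)
    · have hy' : y ∈ S \ A := mem_sdiff.2 ⟨hy, hyA⟩
      exact .inr (.inr ⟨_, hcross hxA hy' hxp hyp,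
        .inl ⟨mem_inter.2 ⟨hxp, hxA⟩, mem_inter.2 ⟨hyp, hy'⟩⟩⟩)
    · have hx' : x ∈ S \ A := mem_sdiff.2 ⟨hx, hxA⟩
      exact .inr (.inr ⟨_, hcross hyA hx' hyp hxp,
        .inr ⟨mem_inter.2 ⟨hyp, hyA⟩, mem_inter.2 ⟨hxp, hx'⟩⟩⟩)
    · exact .inr (.inl ((samePart_restrictParts_iff (mem_sdiff.2 ⟨hx, hxA⟩)
        (mem_sdiff.2 ⟨hy, hyA⟩)).2 ⟨p, hp, hxp, hyp⟩))
  · rintro (h | h | ⟨z, hz, h⟩)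
    · exact h.of_restrictParts
    · exact h.of_restrictParts
    · obtain ⟨p, hp, rfl⟩ := mem_image.1 hz
      rcases h with ⟨hx, hy⟩ | ⟨hy, hx⟩ <;>
        exact ⟨p, (mem_filter.1 hp).1, (mem_inter.1 hx).1, (mem_inter.1 hy).1⟩

namespace IsPartition

variable {S : Finset α} {c : ℕ} {P : Finset (Finset α)}

theorem eq_of_inter_eq (hP : IsPartition S c P) {A p q : Finset α} (hp : p ∈ P) (hq : q ∈ P)
    (hne : (p ∩ A).Nonempty) (h : p ∩ A = q ∩ A) : p = q := by
  obtain ⟨x, hx⟩ := hne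
  exact hP.eq_of_mem hp hq (mem_inter.1 hx).1 (mem_inter.1 (h ▸ hx)).1

theorem card_restrictParts (hP : IsPartition S c P) (A : Finset α) :
    #(restrictParts P A) = #{p ∈ P | (p ∩ A).Nonempty} :=
  card_image_of_injOn fun _ hp _ hq h => hP.eq_of_inter_eq (mem_filter.1 hp).1
    (mem_filter.1 hq).1 (mem_filter.1 hp).2 h

theorem card_restrictParts_le (hP : IsPartition S c P) (A : Finset α) :
    #(restrictParts P A) ≤ c :=
  hP.card_restrictParts A ▸ hP.1 ▸ card_filter_le _ _

theorem restrictParts_nonempty (hP : IsPartition S c P) {A : Finset α} (hA : A ⊆ S)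
    (hne : A.Nonempty) : (restrictParts P A).Nonempty := by
  obtain ⟨x, hx⟩ := hne
  obtain ⟨p, hp, hxp⟩ := hP.exists_mem (hA hx)
  exact ⟨p ∩ A, mem_image.2 ⟨p, mem_filter.2 ⟨hp, x, mem_inter.2 ⟨hxp, hx⟩⟩, rfl⟩⟩

theorem restrict (hP : IsPartition S c P) {A : Finset α} (hA : A ⊆ S) :
    IsPartition A #(restrictParts P A) (restrictParts P A) := by
  refine ⟨rfl, ?_, ?_, fun x => ⟨fun hx => ?_, ?_⟩⟩
  · intro q hq
    obtain ⟨p, hp, rfl⟩ := mem_image.1 hq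
    exact (mem_filter.1 hp).2
  · intro q hq q' hq' hne
    obtain ⟨p, hp, rfl⟩ := mem_image.1 hq
    obtain ⟨p', hp', rfl⟩ := mem_image.1 hq'
    have hpp' : p ≠ p' := fun h => hne (h ▸ rfl)
    exact (hP.2.2.1 p (mem_filter.1 hp).1 p' (mem_filter.1 hp').1 hpp').mono
      inter_subset_left inter_subset_left
  · obtain ⟨p, hp, hxp⟩ := hP.exists_mem (hA hx)
    exact ⟨p ∩ A, mem_image.2 ⟨p, mem_filter.2 ⟨hp, x, mem_inter.2 ⟨hxp, hx⟩⟩, rfl⟩,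
      mem_inter.2 ⟨hxp, hx⟩⟩
  · rintro ⟨q, hq, hxq⟩
    obtain ⟨p, -, rfl⟩ := mem_image.1 hq
    exact (mem_inter.1 hxq).2

theorem card_add_card_crossingPairs (hP : IsPartition S c P) (A : Finset α) :
    #P + #(crossingPairs P A (S \ A)) = #(restrictParts P A) + #(restrictParts P (S \ A)) := by
  have hcross : #(crossingPairs P A (S \ A)) =
      #{p ∈ P | (p ∩ A).Nonempty ∧ (p ∩ (S \ A)).Nonempty} :=
    card_image_of_injOn fun p hp q hq h => hP.eq_of_inter_eq (mem_filter.1 hp).1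
      (mem_filter.1 hq).1 (mem_filter.1 hp).2.1 (congrArg Prod.fst h)
  have hcover : {p ∈ P | (p ∩ A).Nonempty ∨ (p ∩ (S \ A)).Nonempty} = P := by
    refine filter_true_of_mem fun p hp => ?_
    obtain ⟨x, hx⟩ := hP.2.1 p hp
    by_cases hxA : x ∈ A
    · exact .inl ⟨x, mem_inter.2 ⟨hx, hxA⟩⟩
    · exact .inr ⟨x, mem_inter.2 ⟨hx, mem_sdiff.2 ⟨hP.subset hp hx, hxA⟩⟩⟩
  have h := card_union_add_card_inter {p ∈ P | (p ∩ A).Nonempty} {p ∈ P | (p ∩ (S \ A)).Nonempty}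
  rwa [← filter_or, hcover, ← filter_and, ← hcross, ← hP.card_restrictParts,
    ← hP.card_restrictParts] at h

end IsPartition

end Partitions

section Matchings

variable {α β : Type*}

open Classical in
noncomputable def matchings (Q₁ : Finset α) (Q₂ : Finset β) (j : ℕ) : Finset (Finset (α × β)) :=
  {M ∈ (Q₁ ×ˢ Q₂).powersetCard j | Set.InjOn Prod.fst (M : Set (α × β)) ∧
    Set.InjOn Prod.snd (M : Set (α × β))}

open Classical in
theorem mem_matchings {Q₁ : Finset α} {Q₂ : Finset β} {j : ℕ} {M : Finset (α × β)} :
    M ∈ matchings Q₁ Q₂ j ↔ M ⊆ Q₁ ×ˢ Q₂ ∧ #M = j ∧ Set.InjOn Prod.fst (M : Set (α × β)) ∧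
      Set.InjOn Prod.snd (M : Set (α × β)) := by
  rw [matchings, mem_filter, mem_powersetCard, and_assoc]

theorem card_matchings_zero_le (Q₁ : Finset α) (Q₂ : Finset β) : #(matchings Q₁ Q₂ 0) ≤ 1 :=
  card_le_one.2 fun M hM N hN => by
    rw [card_eq_zero.1 (mem_matchings.1 hM).2.1, card_eq_zero.1 (mem_matchings.1 hN).2.1]

theorem matchings_insert_subset [DecidableEq α] [DecidableEq β] (x : α) (Q₁ : Finset α)
    (Q₂ : Finset β) (j : ℕ) :
    matchings (insert x Q₁) Q₂ (j + 1) ⊆ matchings Q₁ Q₂ (j + 1) ∪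
      Q₂.biUnion fun y => (matchings Q₁ (Q₂.erase y) j).image (insert (x, y)) := by
  intro M hM
  obtain ⟨hsub, hcard, hfst, hsnd⟩ := mem_matchings.1 hM
  rw [mem_union, mem_biUnion]
  by_cases hxM : ∃ y, (x, y) ∈ M
  · obtain ⟨y, hxy⟩ := hxM
    refine .inr ⟨y, (mem_product.1 (hsub hxy)).2,
      mem_image.2 ⟨M.erase (x, y), ?_, insert_erase hxy⟩⟩
    refine mem_matchings.2 ⟨fun z hz => ?_, by rw [card_erase_of_mem hxy, hcard]; rfl,
      hfst.mono (by simp), hsnd.mono (by simp)⟩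
    obtain ⟨hzxy, hzM⟩ := mem_erase.1 hz
    obtain ⟨hz1, hz2⟩ := mem_product.1 (hsub hzM)
    refine mem_product.2 ⟨(mem_insert.1 hz1).resolve_left fun h => hzxy ?_,
      mem_erase.2 ⟨fun h => hzxy ?_, hz2⟩⟩
    · exact hfst hzM hxy h
    · exact hsnd hzM hxy h
  · rw [not_exists] at hxM
    refine .inl (mem_matchings.2 ⟨fun z hz => ?_, hcard, hfst, hsnd⟩)
    obtain ⟨hz1, hz2⟩ := mem_product.1 (hsub hz)
    refine mem_product.2 ⟨(mem_insert.1 hz1).resolve_left fun h => hxM z.2 ?_, hz2⟩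
    rwa [← h]

theorem card_matchings_le (Q₁ : Finset α) (Q₂ : Finset β) (j : ℕ) :
    #(matchings Q₁ Q₂ j) ≤ (#Q₁).choose j * (#Q₂).descFactorial j := by
  classical
  induction Q₁ using Finset.induction_on generalizing Q₂ j with
  | empty =>
    cases j with
    | zero => simpa using card_matchings_zero_le ∅ Q₂
    | succ j =>
      have : matchings (∅ : Finset α) Q₂ (j + 1) = ∅ := by simp [matchings]
      simp [this]
  | insert x Q₁ hx ih =>
    cases j with
    | zero => simpa using card_matchings_zero_le (insert x Q₁) Q₂
    | succ j =>
      have hsum : ∑ y ∈ Q₂, #(matchings Q₁ (Q₂.erase y) j) ≤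
          #Q₂ * ((#Q₁).choose j * (#Q₂ - 1).descFactorial j) := by
        rw [← smul_eq_mul, ← sum_const]
        exact sum_le_sum fun y hy => card_erase_of_mem hy ▸ ih _ _
      have hdesc : #Q₂ * (#Q₂ - 1).descFactorial j = (#Q₂).descFactorial (j + 1) := by
        cases #Q₂ with
        | zero => simp
        | succ n => rw [Nat.succ_descFactorial_succ, Nat.add_sub_cancel]
      calc #(matchings (insert x Q₁) Q₂ (j + 1))
          ≤ #(matchings Q₁ Q₂ (j + 1)) + ∑ y ∈ Q₂, #(matchings Q₁ (Q₂.erase y) j) :=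
            (card_le_card (matchings_insert_subset x Q₁ Q₂ j)).trans <| (card_union_le _ _).trans <|
              Nat.add_le_add_left (card_biUnion_le.trans (sum_le_sum fun _ _ => card_image_le)) _
        _ ≤ (#Q₁).choose (j + 1) * (#Q₂).descFactorial (j + 1) +
            #Q₂ * ((#Q₁).choose j * (#Q₂ - 1).descFactorial j) := Nat.add_le_add (ih _ _) hsum
        _ = (#(insert x Q₁)).choose (j + 1) * (#Q₂).descFactorial (j + 1) := by
            rw [card_insert_of_notMem hx, Nat.choose_succ_succ', ← hdesc]
            ring

theorem choose_mul_descFactorial_eq {a b c : ℕ} (hac : a ≤ c) (hbc : b ≤ c) (hc : c ≤ a + b) :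
    a.choose (a + b - c) * b.descFactorial (a + b - c) =
      a.choose (c - b) * b.choose (c - a) * (a + b - c).factorial := by
  rw [Nat.descFactorial_eq_factorial_mul_choose, ← Nat.choose_symm (by omega : a + b - c ≤ a),
    ← Nat.choose_symm (by omega : a + b - c ≤ b), show a - (a + b - c) = c - b by omega,
    show b - (a + b - c) = c - a by omega]
  ring

theorem IsPartition.crossingPairs_mem_matchings [DecidableEq α] {S : Finset α} {c : ℕ}
    {P : Finset (Finset α)} (hP : IsPartition S c P) (A B : Finset α) :
    crossingPairs P A B ∈ matchings (restrictParts P A) (restrictParts P B)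
      #(crossingPairs P A B) := by
  refine mem_matchings.2 ⟨fun z hz => ?_, rfl, ?_, ?_⟩
  · obtain ⟨p, hp, rfl⟩ := mem_image.1 hz
    obtain ⟨hpP, hA, hB⟩ := mem_filter.1 hp
    exact mem_product.2 ⟨mem_image.2 ⟨p, mem_filter.2 ⟨hpP, hA⟩, rfl⟩,
      mem_image.2 ⟨p, mem_filter.2 ⟨hpP, hB⟩, rfl⟩⟩
  · rintro _ hz _ hw h
    obtain ⟨p, hp, rfl⟩ := mem_image.1 (mem_coe.1 hz)
    obtain ⟨q, hq, rfl⟩ := mem_image.1 (mem_coe.1 hw)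
    rw [hP.eq_of_inter_eq (mem_filter.1 hp).1 (mem_filter.1 hq).1 (mem_filter.1 hp).2.1 h]
  · rintro _ hz _ hw h
    obtain ⟨p, hp, rfl⟩ := mem_image.1 (mem_coe.1 hz)
    obtain ⟨q, hq, rfl⟩ := mem_image.1 (mem_coe.1 hw)
    rw [hP.eq_of_inter_eq (mem_filter.1 hp).1 (mem_filter.1 hq).1 (mem_filter.1 hp).2.2 h]

end Matchings

section TopSets

variable {α β : Type*} [LinearOrder β]

def IsTopSet (key : α → β) (S A : Finset α) : Prop :=
  A ⊆ S ∧ ∀ x ∈ A, ∀ y ∈ S, y ∉ A → key y < key x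

namespace IsTopSet

variable {key : α → β} {S A B : Finset α}

theorem subset_or_subset (hA : IsTopSet key S A) (hB : IsTopSet key S B) : A ⊆ B ∨ B ⊆ A := by
  by_contra! h
  obtain ⟨x, hxA, hxB⟩ := not_subset.1 h.1
  obtain ⟨y, hyB, hyA⟩ := not_subset.1 h.2
  exact lt_asymm (hA.2 x hxA y (hB.1 hyB) hyA) (hB.2 y hyB x (hA.1 hxA) hxB)

theorem subset_of_card_le (hA : IsTopSet key S A) (hB : IsTopSet key S B) (h : #A ≤ #B) :
    A ⊆ B :=
  (hA.subset_or_subset hB).elim id fun hBA => (eq_of_subset_of_card_le hBA h).ge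

theorem exists_threshold {key : α → ℝ} (hA : IsTopSet key S A) :
    ∃ θ, ∀ x ∈ S, x ∈ A ↔ θ < key x := by
  classical
  rcases (S \ A).eq_empty_or_nonempty with h | h
  · obtain ⟨θ, hθ⟩ := (S.image key).bddBelow
    refine ⟨θ - 1, fun x hx => iff_of_true (sdiff_eq_empty_iff_subset.1 h hx) ?_⟩
    linarith [hθ (mem_coe.2 (mem_image_of_mem key hx))]
  · obtain ⟨y, hy, hmax⟩ := exists_max_image (S \ A) key h
    refine ⟨key y, fun x hx => ⟨fun hxA => hA.2 x hxA y (mem_sdiff.1 hy).1 (mem_sdiff.1 hy).2,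
      fun hlt => ?_⟩⟩
    by_contra hxA
    exact (hmax x (mem_sdiff.2 ⟨hx, hxA⟩)).not_gt hlt

theorem subset_of_neg {key : α → ℝ} (hA : IsTopSet key S A) (hA' : IsTopSet (-key) S A)
    (hne : A.Nonempty) : S ⊆ A := by
  intro y hy
  by_contra hyA
  obtain ⟨x, hx⟩ := hne
  have := hA'.2 x hx y hy hyA
  simp only [Pi.neg_apply, neg_lt_neg_iff] at this
  exact lt_asymm this (hA.2 x hx y hy hyA)

end IsTopSet

theorem exists_isTopSet {key : α → β} {S : Finset α} (hkey : Set.InjOn key S) {k : ℕ}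
    (hk : k ≤ #S) : ∃ A, IsTopSet key S A ∧ #A = k := by
  classical
  induction k with
  | zero => exact ⟨∅, ⟨empty_subset S, by simp⟩, card_empty⟩
  | succ k ih =>
    obtain ⟨A, hA, hAk⟩ := ih (by omega)
    have hne : (S \ A).Nonempty := by
      rw [← card_pos, card_sdiff_of_subset hA.1]
      omega
    obtain ⟨x, hx, hmax⟩ := exists_max_image (S \ A) key hne
    obtain ⟨hxS, hxA⟩ := mem_sdiff.1 hx
    refine ⟨insert x A, ⟨insert_subset hxS hA.1, fun z hz y hy hyz => ?_⟩,
      by rw [card_insert_of_notMem hxA, hAk]⟩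
    obtain ⟨hyx, hyA⟩ := not_or.1 (mem_insert.not.1 hyz)
    rcases mem_insert.1 hz with rfl | hzA
    · exact (hmax y (mem_sdiff.2 ⟨hy, hyA⟩)).lt_of_ne fun h => hyx (hkey hy hxS h)
    · exact hA.2 z hzA y hy hyA

open Classical in
theorem card_filter_isTopSet_le_one (key : α → β) (S : Finset α) (k : ℕ) :
    #{A ∈ S.powersetCard k | IsTopSet key S A} ≤ 1 := by
  refine card_le_one.2 fun A hA B hB => ?_
  obtain ⟨hA, hAt⟩ := mem_filter.1 hA
  obtain ⟨hB, hBt⟩ := mem_filter.1 hB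
  have hcard : #A = #B := by rw [(mem_powersetCard.1 hA).2, (mem_powersetCard.1 hB).2]
  exact (hAt.subset_of_card_le hBt hcard.le).antisymm (hBt.subset_of_card_le hAt hcard.ge)

end TopSets

theorem TreeStruct.leaves_pos : ∀ T : TreeStruct, 0 < T.leaves
  | .leaf => Nat.one_pos
  | .node l _ => Nat.add_pos_left l.leaves_pos _

section DecisionTrees

variable {ℓ : ℕ}

def signedCoord (i : Fin ℓ) (s : Bool) (x : Fin ℓ → ℝ) : ℝ :=
  if s then x i else -x i

theorem signedCoord_not (i : Fin ℓ) (s : Bool) : signedCoord i (!s) = -signedCoord i s := by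
  funext x
  cases s <;> simp [signedCoord]

theorem isTopSet_signedCoord (S : Finset (Fin ℓ → ℝ)) (i : Fin ℓ) (θ : ℝ) (s : Bool) :
    IsTopSet (signedCoord i s) S {x ∈ S | decide (θ < x i) = s} := by
  refine ⟨filter_subset _ _, fun x hx y hy hyx => ?_⟩
  have hxs := (mem_filter.1 hx).2
  have hys : decide (θ < y i) ≠ s := fun h => hyx (mem_filter.2 ⟨hy, h⟩)
  cases s <;> simp_all [signedCoord] <;> linarith

def IsGeneric (S : Finset (Fin ℓ → ℝ)) : Prop :=
  ∀ i, Set.InjOn (fun x : Fin ℓ → ℝ => x i) S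

theorem IsGeneric.injOn_signedCoord {S : Finset (Fin ℓ → ℝ)} (hS : IsGeneric S) (i : Fin ℓ)
    (s : Bool) : Set.InjOn (signedCoord i s) S := fun x hx y hy h =>
  hS i hx hy (by cases s <;> simpa [signedCoord] using h)

namespace DTree

variable {Y : Type}

def Realizes (t : DTree ℓ ℕ) (S : Finset (Fin ℓ → ℝ)) (P : Finset (Finset (Fin ℓ → ℝ))) :
    Prop :=
  ∀ x ∈ S, ∀ y ∈ S, SamePart P x y ↔ t.eval x = t.eval y

theorem Realizes.restrictParts {t t' : DTree ℓ ℕ} {S A : Finset (Fin ℓ → ℝ)}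
    {P : Finset (Finset (Fin ℓ → ℝ))} (ht : t.Realizes S P) (hA : A ⊆ S)
    (h : ∀ x ∈ A, t'.eval x = t.eval x) : t'.Realizes A (restrictParts P A) := fun x hx y hy => by
  rw [samePart_restrictParts_iff hx hy, ht x (hA hx) y (hA hy), h x hx, h y hy]

theorem eval_node_of_decide_eq {i : Fin ℓ} {θ : ℝ} {s : Bool} {l r : DTree ℓ Y}
    {x : Fin ℓ → ℝ} (h : decide (θ < x i) = s) : (node i θ s l r).eval x = l.eval x := by
  rw [eval, if_pos h]

theorem eval_node_of_decide_ne {i : Fin ℓ} {θ : ℝ} {s : Bool} {l r : DTree ℓ Y}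
    {x : Fin ℓ → ℝ} (h : decide (θ < x i) ≠ s) : (node i θ s l r).eval x = r.eval x := by
  rw [eval, if_neg h]

theorem eval_node_not (i : Fin ℓ) (θ : ℝ) (s : Bool) (l r : DTree ℓ Y) (x : Fin ℓ → ℝ) :
    (node i θ (!s) r l).eval x = (node i θ s l r).eval x := by
  cases s <;> cases h : decide (θ < x i) <;> simp [eval, h]

theorem exists_shape_eq_eval_eq {i : Fin ℓ} (T : TreeStruct) {D : Finset (Fin ℓ → ℝ)}
    (hi : Set.InjOn (fun x : Fin ℓ → ℝ => x i) D) (hD : #D ≤ T.leaves) (f : (Fin ℓ → ℝ) → Y) :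
    ∃ t : DTree ℓ Y, t.shape = T ∧ ∀ x ∈ D, t.eval x = f x := by
  induction T generalizing D with
  | leaf =>
    obtain ⟨x₀, hx₀⟩ := card_le_one_iff_subset_singleton.1 hD
    exact ⟨.leaf (f x₀), rfl, fun x hx => by rw [mem_singleton.1 (hx₀ hx)]; rfl⟩
  | node l r ihl ihr =>
    obtain ⟨A, hA, hAcard⟩ := exists_isTopSet hi (k := min #D l.leaves) (min_le_left _ _)
    obtain ⟨θ, hθ⟩ := hA.exists_threshold
    obtain ⟨tl, hl, htl⟩ := ihl (hi.mono hA.1) (hAcard ▸ min_le_right _ _)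
    obtain ⟨tr, hr, htr⟩ := ihr (hi.mono sdiff_subset)
      (by rw [card_sdiff_of_subset hA.1, hAcard]; simp only [TreeStruct.leaves] at hD; omega)
    refine ⟨.node i θ true tl tr, by rw [shape, hl, hr], fun x hx => ?_⟩
    by_cases hxA : x ∈ A
    · rw [eval_node_of_decide_eq (decide_eq_true ((hθ x hx).1 hxA)), htl x hxA]
    · rw [eval_node_of_decide_ne (by simpa using mt (hθ x hx).2 hxA),
        htr x (mem_sdiff.2 ⟨hx, hxA⟩)]

theorem exists_shape_eq_eval_comp {S : Finset (Fin ℓ → ℝ)} {g : (Fin ℓ → ℝ) → Fin ℓ → ℝ}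
    (hg : ∀ i θ, ∃ θ', ∀ x ∈ S, θ' < g x i ↔ θ < x i) (t : DTree ℓ Y) :
    ∃ t' : DTree ℓ Y, t'.shape = t.shape ∧ ∀ x ∈ S, t'.eval (g x) = t.eval x := by
  induction t with
  | leaf y => exact ⟨.leaf y, rfl, fun _ _ => rfl⟩
  | node i θ s l r ihl ihr =>
    obtain ⟨l', hl, hle⟩ := ihl
    obtain ⟨r', hr, hre⟩ := ihr
    obtain ⟨θ', hθ'⟩ := hg i θ
    refine ⟨.node i θ' s l' r', by rw [shape, shape, hl, hr], fun x hx => ?_⟩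
    simp only [eval, hθ' x hx, hle x hx, hre x hx]

end DTree

theorem treeRealizable_of_card_le_leaves {T : TreeStruct} {i : Fin ℓ} {c : ℕ}
    {D : Finset (Fin ℓ → ℝ)} {P : Finset (Finset (Fin ℓ → ℝ))}
    (hi : Set.InjOn (fun x : Fin ℓ → ℝ => x i) D) (hP : IsPartition D c P) (hD : #D ≤ T.leaves) :
    TreeRealizable ℓ T D P := by
  obtain ⟨f, hf⟩ := hP.exists_label
  obtain ⟨t, ht, htf⟩ := DTree.exists_shape_eq_eval_eq T hi hD f
  exact ⟨t, ht, fun x hx y hy => by rw [htf x hx, htf y hy]; exact hf x hx y hy⟩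

end DecisionTrees

section PartitioningFunction

variable {ℓ : ℕ}

open Classical in
noncomputable def realizablePartitions (ℓ : ℕ) (T : TreeStruct) (a : ℕ)
    (S : Finset (Fin ℓ → ℝ)) : Finset (Finset (Finset (Fin ℓ → ℝ))) :=
  {P ∈ S.powerset.powerset | P ∈ PartSet ℓ T a S}

open Classical in
theorem mem_realizablePartitions {T : TreeStruct} {a : ℕ} {S : Finset (Fin ℓ → ℝ)}
    {P : Finset (Finset (Fin ℓ → ℝ))} :
    P ∈ realizablePartitions ℓ T a S ↔ IsPartition S a P ∧ TreeRealizable ℓ T S P := by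
  rw [realizablePartitions, mem_filter]
  exact and_iff_right_of_imp fun hP => mem_powerset.2 fun p hp => mem_powerset.2 (hP.1.subset hp)

theorem ncard_partSet (T : TreeStruct) (a : ℕ) (S : Finset (Fin ℓ → ℝ)) :
    (PartSet ℓ T a S).ncard = #(realizablePartitions ℓ T a S) := by
  rw [← Set.ncard_coe_finset]
  congr
  ext P
  rw [mem_coe, mem_realizablePartitions]
  rfl

theorem bddAbove_ncard_partSet (T : TreeStruct) (a m : ℕ) :
    BddAbove {n | ∃ S : Finset (Fin ℓ → ℝ), #S = m ∧ n = (PartSet ℓ T a S).ncard} := by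
  refine ⟨2 ^ 2 ^ m, ?_⟩
  rintro _ ⟨S, rfl, rfl⟩
  rw [ncard_partSet, ← card_powerset, ← card_powerset, realizablePartitions]
  classical
  exact card_filter_le _ _

theorem card_realizablePartitions_le_treePi (T : TreeStruct) (a : ℕ) (S : Finset (Fin ℓ → ℝ)) :
    #(realizablePartitions ℓ T a S) ≤ treePi ℓ T a #S :=
  le_csSup (bddAbove_ncard_partSet T a #S) ⟨S, rfl, (ncard_partSet T a S).symm⟩

theorem mul_treePi_le {T : TreeStruct} {a m n B : ℕ}
    (h : ∀ S : Finset (Fin ℓ → ℝ), #S = m → n * #(realizablePartitions ℓ T a S) ≤ B) :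
    n * treePi ℓ T a m ≤ B := by
  rcases Set.eq_empty_or_nonempty
    {n | ∃ S : Finset (Fin ℓ → ℝ), #S = m ∧ n = (PartSet ℓ T a S).ncard} with he | hne
  · simp [treePi, he]
  · obtain ⟨S, hS, heq⟩ := Nat.sSup_mem hne (bddAbove_ncard_partSet T a m)
    rw [treePi, heq, ncard_partSet]
    exact h S hS

end PartitioningFunction

section Perturbation

open Filter Topology

variable {ℓ : ℕ}

theorem exists_threshold_of_lt_imp_lt {S : Finset (Fin ℓ → ℝ)} {g : (Fin ℓ → ℝ) → Fin ℓ → ℝ}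
    {i : Fin ℓ} (hg : ∀ x ∈ S, ∀ y ∈ S, x i < y i → g x i < g y i) (θ : ℝ) :
    ∃ θ', ∀ x ∈ S, θ' < g x i ↔ θ < x i := by
  have hU : IsTopSet (fun x => g x i) S {x ∈ S | θ < x i} :=
    ⟨filter_subset _ _, fun x hx y hy hyx => hg y hy x (mem_filter.1 hx).1
      ((not_lt.1 fun h => hyx (mem_filter.2 ⟨hy, h⟩)).trans_lt (mem_filter.1 hx).2)⟩
  obtain ⟨θ', hθ'⟩ := hU.exists_threshold
  exact ⟨θ', fun x hx => by rw [← hθ' x hx, mem_filter, and_iff_right hx]⟩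

/-- Shifting every point `x` by `ε φ(x)` in all coordinates, with `φ` injective on `S` and
`ε > 0` small, keeps strict inequalities between coordinates and breaks all ties. -/
theorem exists_perturbation (S : Finset (Fin ℓ → ℝ)) :
    ∃ g : (Fin ℓ → ℝ) → Fin ℓ → ℝ, (∀ x ∈ S, ∀ y ∈ S, ∀ i, x i < y i → g x i < g y i) ∧
      ∀ x ∈ S, ∀ y ∈ S, x ≠ y → ∀ i, g x i ≠ g y i := by
  set φ : (Fin ℓ → ℝ) → ℝ := fun x => S.toList.idxOf x
  have hφ : Set.InjOn φ S := fun x hx y _ h =>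
    (List.idxOf_inj (mem_toList.2 hx)).1 (Nat.cast_injective h)
  have hlex : ∀ᶠ ε in 𝓝[>] (0 : ℝ), ∀ x ∈ S, ∀ y ∈ S, ∀ i,
      x i < y i ∨ x i = y i ∧ φ x < φ y → x i + ε * φ x < y i + ε * φ y := by
    simp only [eventually_all_finset, eventually_all]
    intro x _ y _ i h
    rcases h with hlt | ⟨heq, hlt⟩
    · exact eventually_nhdsWithin_of_eventually_nhds <|
        ContinuousAt.eventually_lt (by fun_prop) (by fun_prop) (by simpa using hlt)
    · filter_upwards [self_mem_nhdsWithin] with ε (hε : 0 < ε)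
      rw [heq]
      linarith [mul_lt_mul_of_pos_left hlt hε]
  obtain ⟨ε, hε⟩ := hlex.exists
  refine ⟨fun x i => x i + ε * φ x, fun x hx y hy i h => hε x hx y hy i (.inl h),
    fun x hx y hy hxy i => ?_⟩
  have hφxy : φ x ≠ φ y := fun h => hxy (hφ hx hy h)
  rcases lt_trichotomy (x i) (y i) with h | h | h
  · exact (hε x hx y hy i (.inl h)).ne
  · rcases hφxy.lt_or_gt with h' | h'
    · exact (hε x hx y hy i (.inr ⟨h, h'⟩)).ne
    · exact (hε y hy x hx i (.inr ⟨h.symm, h'⟩)).ne'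
  · exact (hε y hy x hx i (.inl h)).ne'

theorem exists_isGeneric_card_le (T : TreeStruct) (c : ℕ) (S : Finset (Fin ℓ → ℝ)) :
    ∃ S' : Finset (Fin ℓ → ℝ), #S' = #S ∧ IsGeneric S' ∧
      #(realizablePartitions ℓ T c S) ≤ #(realizablePartitions ℓ T c S') := by
  obtain ⟨g, hmono, hsep⟩ := exists_perturbation S
  have hinj : Set.InjOn g S := fun x hx y hy h => by
    by_contra hxy
    obtain ⟨i, -⟩ := Function.ne_iff.1 hxy
    exact hsep x hx y hy hxy i (congrFun h i)
  have htree := DTree.exists_shape_eq_eval_comp (Y := ℕ) fun i θ =>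
    exists_threshold_of_lt_imp_lt (fun x hx y hy => hmono x hx y hy i) θ
  refine ⟨S.image g, card_image_of_injOn hinj, fun i => ?_, card_le_card_of_injOn
    (fun P => P.image (Finset.image g)) (fun P hP => ?_) fun P hP P' hP' h => ?_⟩
  · rintro _ hx' _ hy' h
    obtain ⟨x, hx, rfl⟩ := mem_image.1 (mem_coe.1 hx')
    obtain ⟨y, hy, rfl⟩ := mem_image.1 (mem_coe.1 hy')
    by_contra hxy
    exact hsep x hx y hy (fun h => hxy (h ▸ rfl)) i h
  · obtain ⟨hPart, t, hts, ht⟩ := mem_realizablePartitions.1 hP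
    obtain ⟨t', hts', ht'⟩ := htree t
    show P.image (image g) ∈ realizablePartitions ℓ T c (S.image g)
    refine mem_realizablePartitions.2 ⟨hPart.image hinj, t', hts'.trans hts, ?_⟩
    rintro _ hx' _ hy'
    obtain ⟨x, hx, rfl⟩ := mem_image.1 hx'
    obtain ⟨y, hy, rfl⟩ := mem_image.1 hy'
    rw [ht' x hx, ht' y hy, ← ht x hx y hy]
    exact samePart_image_iff hinj (fun p => hPart.subset) hx hy
  · have hPart := (mem_realizablePartitions.1 hP).1
    have hPart' := (mem_realizablePartitions.1 hP').1
    refine hPart.ext_samePart hPart' fun x hx y hy => ?_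
    rw [← samePart_image_iff hinj (fun p => hPart.subset) hx hy, show P.image _ = P'.image _ from h,
      samePart_image_iff hinj (fun p => hPart'.subset) hx hy]

end Perturbation

section Cuts

variable {ℓ : ℕ}

def IsAdmissibleCut (Tl Tr : TreeStruct) (S A : Finset (Fin ℓ → ℝ))
    (P : Finset (Finset (Fin ℓ → ℝ))) : Prop :=
  Tl.leaves ≤ #A ∧ Tr.leaves ≤ #(S \ A) ∧ TreeRealizable ℓ Tl A (restrictParts P A) ∧
    TreeRealizable ℓ Tr (S \ A) (restrictParts P (S \ A))

/-- The root rule `(i, θ, s)` sends a top set `A₀` to the left; the top set `A` whose size is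
`#A₀` clamped to `[L_{T_l}, #S - L_{T_r}]` is admissible: a side that shrank is still handled by
the old subtree, and a side that grew has exactly as many points as leaves, so it is shattered. -/
theorem exists_isAdmissibleCut {Tl Tr : TreeStruct} {S : Finset (Fin ℓ → ℝ)} {c : ℕ}
    {P : Finset (Finset (Fin ℓ → ℝ))} {i : Fin ℓ} {θ : ℝ} {s : Bool} {tl tr : DTree ℓ ℕ}
    (hS : IsGeneric S) (hm : Tl.leaves + Tr.leaves ≤ #S) (hP : IsPartition S c P)
    (hl : tl.shape = Tl) (hr : tr.shape = Tr) (ht : (DTree.node i θ s tl tr).Realizes S P) :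
    ∃ A, IsTopSet (signedCoord i s) S A ∧ IsAdmissibleCut Tl Tr S A P := by
  set A₀ := {x ∈ S | decide (θ < x i) = s}
  have hA₀ : IsTopSet (signedCoord i s) S A₀ := isTopSet_signedCoord S i θ s
  set k := max Tl.leaves (min #A₀ (#S - Tr.leaves))
  obtain ⟨A, hA, hAk⟩ := exists_isTopSet (hS.injOn_signedCoord i s) (k := k) (by omega)
  have hSA : #(S \ A) = #S - k := by rw [card_sdiff_of_subset hA.1, hAk]
  refine ⟨A, hA, by omega, by omega, ?_, ?_⟩
  · by_cases hk : k ≤ #A₀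
    · refine ⟨tl, hl, ht.restrictParts hA.1 fun x hx => ?_⟩
      have hxA₀ := hA.subset_of_card_le hA₀ (by omega) hx
      exact (DTree.eval_node_of_decide_eq (mem_filter.1 hxA₀).2).symm
    · exact treeRealizable_of_card_le_leaves ((hS i).mono hA.1) (hP.restrict hA.1) (by omega)
  · by_cases hk : #A₀ ≤ k
    · refine ⟨tr, hr, ht.restrictParts sdiff_subset fun x hx => ?_⟩
      obtain ⟨hxS, hxA⟩ := mem_sdiff.1 hx
      refine (DTree.eval_node_of_decide_ne fun h => hxA ?_).symm
      exact hA₀.subset_of_card_le hA (by omega) (mem_filter.2 ⟨hxS, h⟩)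
    · exact treeRealizable_of_card_le_leaves ((hS i).mono sdiff_subset)
        (hP.restrict sdiff_subset) (by omega)

open Classical in
noncomputable def admissibleCuts (Tl Tr : TreeStruct) (S : Finset (Fin ℓ → ℝ))
    (P : Finset (Finset (Fin ℓ → ℝ))) : Finset (Finset (Fin ℓ → ℝ)) :=
  {A ∈ S.powerset | (∃ i s, IsTopSet (signedCoord i s) S A) ∧ IsAdmissibleCut Tl Tr S A P}

open Classical in
theorem mem_admissibleCuts {Tl Tr : TreeStruct} {S A : Finset (Fin ℓ → ℝ)}
    {P : Finset (Finset (Fin ℓ → ℝ))} :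
    A ∈ admissibleCuts Tl Tr S P ↔
      (∃ i s, IsTopSet (signedCoord i s) S A) ∧ IsAdmissibleCut Tl Tr S A P := by
  rw [admissibleCuts, mem_filter]
  exact and_iff_right_of_imp fun ⟨⟨_, _, hA⟩, _⟩ => mem_powerset.2 hA.1

/-- When `T_l = T_r`, swapping the subtrees and flipping the sign of the root rule gives a
second cut, a top set for the opposite key, hence different from the first. -/
theorem two_pow_le_card_admissibleCuts {Tl Tr : TreeStruct} {S : Finset (Fin ℓ → ℝ)} {c : ℕ}
    {P : Finset (Finset (Fin ℓ → ℝ))} (hS : IsGeneric S) (hm : Tl.leaves + Tr.leaves ≤ #S)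
    (hP : P ∈ realizablePartitions ℓ (.node Tl Tr) c S) :
    2 ^ (if Tl = Tr then 1 else 0) ≤ #(admissibleCuts Tl Tr S P) := by
  obtain ⟨hPart, t, hts, ht⟩ := mem_realizablePartitions.1 hP
  cases t with
  | leaf => cases hts
  | node i θ s tl tr =>
    obtain ⟨hl, hr⟩ := TreeStruct.node.inj hts
    obtain ⟨A, hA, hcut⟩ := exists_isAdmissibleCut hS hm hPart hl hr ht
    have hAmem : A ∈ admissibleCuts Tl Tr S P := mem_admissibleCuts.2 ⟨⟨i, s, hA⟩, hcut⟩
    split_ifs with hT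
    · subst hT
      have ht' : (DTree.node i θ (!s) tr tl).Realizes S P := fun x hx y hy => by
        rw [DTree.eval_node_not, DTree.eval_node_not]
        exact ht x hx y hy
      obtain ⟨B, hB, hcutB⟩ := exists_isAdmissibleCut hS (by omega) hPart hr hl ht'
      refine one_lt_card.2 ⟨A, hAmem, B, mem_admissibleCuts.2 ⟨⟨i, !s, hB⟩, hcutB⟩, ?_⟩
      rintro rfl
      rw [signedCoord_not] at hB
      have hSA := hA.subset_of_neg hB (card_pos.1 (Tl.leaves_pos.trans_le hcut.1))
      have := hcut.2.1
      rw [sdiff_eq_empty_iff_subset.2 hSA, card_empty] at this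
      exact Tl.leaves_pos.not_ge this
    · exact card_pos.2 ⟨A, hAmem⟩

end Cuts

section Codes

def splitCode {α : Type*} [DecidableEq α] (S A : Finset α) (P : Finset (Finset α)) :
    Finset α × Finset (Finset α) × Finset (Finset α) × Finset (Finset α × Finset α) :=
  (A, restrictParts P A, restrictParts P (S \ A), crossingPairs P A (S \ A))

theorem IsPartition.eq_of_splitCode_eq {α : Type*} [DecidableEq α] {S A A' : Finset α} {c c' : ℕ}
    {P P' : Finset (Finset α)} (hP : IsPartition S c P) (hP' : IsPartition S c' P')
    (h : splitCode S A P = splitCode S A' P') : A = A' ∧ P = P' := by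
  simp only [splitCode, Prod.mk.injEq] at h
  obtain ⟨rfl, h₁, h₂, h₃⟩ := h
  refine ⟨rfl, hP.ext_samePart hP' fun x hx y hy => ?_⟩
  rw [samePart_iff_of_mem (P := P) (A := A) hx hy, samePart_iff_of_mem (P := P') hx hy, h₁, h₂, h₃]

variable {ℓ : ℕ}

open Classical in
noncomputable def signedTopSets (S : Finset (Fin ℓ → ℝ)) (k : ℕ) : Finset (Finset (Fin ℓ → ℝ)) :=
  (univ : Finset (Fin ℓ × Bool)).biUnion fun is =>
    {A ∈ S.powersetCard k | IsTopSet (signedCoord is.1 is.2) S A}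

open Classical in
theorem card_signedTopSets_le (S : Finset (Fin ℓ → ℝ)) (k : ℕ) :
    #(signedTopSets S k) ≤ min (2 * ℓ) ((#S).choose k) := by
  refine le_min ?_ ?_
  · calc #(signedTopSets S k) ≤ ∑ _is : Fin ℓ × Bool, 1 :=
          card_biUnion_le.trans (sum_le_sum fun _ _ => card_filter_isTopSet_le_one _ _ _)
      _ = 2 * ℓ := by simp [mul_comm]
  · rw [← card_powersetCard]
    exact card_le_card (biUnion_subset.2 fun _ _ => filter_subset _ _)

open Classical in
/-- Candidate values of `splitCode S A P`, sorted by `k = #A` and by the numbers `(a, b)` of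
parts on the two sides. -/
noncomputable def splitCodes (ℓ : ℕ) (Tl Tr : TreeStruct) (c : ℕ) (S : Finset (Fin ℓ → ℝ)) :
    Finset (Finset (Fin ℓ → ℝ) × Finset (Finset (Fin ℓ → ℝ)) × Finset (Finset (Fin ℓ → ℝ)) ×
      Finset (Finset (Fin ℓ → ℝ) × Finset (Fin ℓ → ℝ))) :=
  (Icc Tl.leaves (#S - Tr.leaves)).biUnion fun k => (signedTopSets S k).biUnion fun A =>
    {ab ∈ Icc 1 c ×ˢ Icc 1 c | c ≤ ab.1 + ab.2}.biUnion fun ab =>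
      (realizablePartitions ℓ Tl ab.1 A ×ˢ realizablePartitions ℓ Tr ab.2 (S \ A)).biUnion
        fun Q => (matchings Q.1 Q.2 (ab.1 + ab.2 - c)).image fun M => (A, Q.1, Q.2, M)

open Classical in
theorem splitCode_mem_splitCodes {Tl Tr : TreeStruct} {c : ℕ} {S A : Finset (Fin ℓ → ℝ)}
    {P : Finset (Finset (Fin ℓ → ℝ))} (hP : IsPartition S c P) (hA : A ∈ admissibleCuts Tl Tr S P) :
    splitCode S A P ∈ splitCodes ℓ Tl Tr c S := by
  obtain ⟨⟨i, s, hAtop⟩, hl, hr, hrl, hrr⟩ := mem_admissibleCuts.1 hA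
  have hAS := hAtop.1
  have hSA : #(S \ A) = #S - #A := card_sdiff_of_subset hAS
  have hAS' : #A ≤ #S := card_le_card hAS
  have ha := card_pos.2 (hP.restrictParts_nonempty hAS
    (card_pos.1 (Tl.leaves_pos.trans_le hl)))
  have hb := card_pos.2 (hP.restrictParts_nonempty sdiff_subset
    (card_pos.1 (Tr.leaves_pos.trans_le hr)))
  have hac := hP.card_restrictParts_le A
  have hbc := hP.card_restrictParts_le (S \ A)
  have hsplit := hP.card_add_card_crossingPairs A
  rw [hP.1] at hsplit
  have hmatch := hP.crossingPairs_mem_matchings A (S \ A)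
  rw [show #(crossingPairs P A (S \ A)) =
    #(restrictParts P A) + #(restrictParts P (S \ A)) - c by omega] at hmatch
  refine mem_biUnion.2 ⟨#A, mem_Icc.2 ⟨hl, by omega⟩, mem_biUnion.2 ⟨A, ?_, ?_⟩⟩
  · exact mem_biUnion.2 ⟨(i, s), mem_univ _, mem_filter.2 ⟨mem_powersetCard.2 ⟨hAS, rfl⟩, hAtop⟩⟩
  refine mem_biUnion.2 ⟨(#(restrictParts P A), #(restrictParts P (S \ A))), ?_, ?_⟩
  · exact mem_filter.2 ⟨mem_product.2 ⟨mem_Icc.2 ⟨ha, hac⟩, mem_Icc.2 ⟨hb, hbc⟩⟩, by simp; omega⟩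
  refine mem_biUnion.2 ⟨(restrictParts P A, restrictParts P (S \ A)), ?_,
    mem_image.2 ⟨_, hmatch, rfl⟩⟩
  exact mem_product.2 ⟨mem_realizablePartitions.2 ⟨hP.restrict hAS, hrl⟩,
    mem_realizablePartitions.2 ⟨hP.restrict sdiff_subset, hrr⟩⟩

open Classical in
theorem two_pow_mul_card_le_card_splitCodes {Tl Tr : TreeStruct} {c : ℕ} {S : Finset (Fin ℓ → ℝ)}
    (hS : IsGeneric S) (hm : Tl.leaves + Tr.leaves ≤ #S) :
    2 ^ (if Tl = Tr then 1 else 0) * #(realizablePartitions ℓ (.node Tl Tr) c S) ≤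
      #(splitCodes ℓ Tl Tr c S) := by
  set PF := realizablePartitions ℓ (.node Tl Tr) c S
  calc 2 ^ (if Tl = Tr then 1 else 0) * #PF = ∑ _P ∈ PF, 2 ^ (if Tl = Tr then 1 else 0) := by
        rw [sum_const, smul_eq_mul, mul_comm]
    _ ≤ ∑ P ∈ PF, #(admissibleCuts Tl Tr S P) :=
        sum_le_sum fun _ hP => two_pow_le_card_admissibleCuts hS hm hP
    _ = #(PF.sigma (admissibleCuts Tl Tr S)) := (card_sigma _ _).symm
    _ ≤ #(splitCodes ℓ Tl Tr c S) := by
      refine card_le_card_of_injOn (fun PA => splitCode S PA.2 PA.1) (fun PA hPA => ?_) ?_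
      · obtain ⟨hP, hA⟩ := mem_sigma.1 hPA
        exact splitCode_mem_splitCodes (mem_realizablePartitions.1 hP).1 hA
      · rintro ⟨P, A⟩ hPA ⟨P', A'⟩ hPA' h
        obtain ⟨rfl, rfl⟩ := (mem_realizablePartitions.1 (mem_sigma.1 hPA).1).1.eq_of_splitCode_eq
          (mem_realizablePartitions.1 (mem_sigma.1 hPA').1).1 h
        rfl

open Classical in
theorem card_splitCodes_le (Tl Tr : TreeStruct) (c : ℕ) (S : Finset (Fin ℓ → ℝ)) :
    #(splitCodes ℓ Tl Tr c S) ≤ ∑ k ∈ Icc Tl.leaves (#S - Tr.leaves),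
      min (2 * ℓ) ((#S).choose k) *
        ∑ p ∈ (Icc 1 c ×ˢ Icc 1 c).filter (fun p => c ≤ p.1 + p.2),
          p.1.choose (c - p.2) * p.2.choose (c - p.1) * (p.1 + p.2 - c).factorial *
            treePi ℓ Tl p.1 k * treePi ℓ Tr p.2 (#S - k) := by
  refine card_biUnion_le.trans (sum_le_sum fun k _ => card_biUnion_le.trans ?_)
  set F := ∑ p ∈ (Icc 1 c ×ˢ Icc 1 c).filter (fun p => c ≤ p.1 + p.2),
    p.1.choose (c - p.2) * p.2.choose (c - p.1) * (p.1 + p.2 - c).factorial *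
      treePi ℓ Tl p.1 k * treePi ℓ Tr p.2 (#S - k)
  calc _ ≤ ∑ _A ∈ signedTopSets S k, F := sum_le_sum fun A hA => ?_
    _ = #(signedTopSets S k) * F := by rw [sum_const, smul_eq_mul]
    _ ≤ min (2 * ℓ) ((#S).choose k) * F := Nat.mul_le_mul_right _ (card_signedTopSets_le S k)
  obtain ⟨_, -, hA⟩ := mem_biUnion.1 hA
  obtain ⟨hAS, hAk⟩ := mem_powersetCard.1 (mem_filter.1 hA).1
  have hSA : #(S \ A) = #S - k := by rw [card_sdiff_of_subset hAS, hAk]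
  refine card_biUnion_le.trans (sum_le_sum fun ab hab => card_biUnion_le.trans ?_)
  obtain ⟨hab, hc⟩ := mem_filter.1 hab
  obtain ⟨ha, hb⟩ := mem_product.1 hab
  set X := ab.1.choose (c - ab.2) * ab.2.choose (c - ab.1) * (ab.1 + ab.2 - c).factorial
  calc _ ≤ ∑ _Q ∈ realizablePartitions ℓ Tl ab.1 A ×ˢ realizablePartitions ℓ Tr ab.2 (S \ A), X :=
        sum_le_sum fun Q hQ => card_image_le.trans ?_
    _ = #(realizablePartitions ℓ Tl ab.1 A) * #(realizablePartitions ℓ Tr ab.2 (S \ A)) * X := by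
        rw [sum_const, card_product, smul_eq_mul]
    _ ≤ treePi ℓ Tl ab.1 k * treePi ℓ Tr ab.2 (#S - k) * X := by
        gcongr
        · exact hAk ▸ card_realizablePartitions_le_treePi Tl ab.1 A
        · exact hSA ▸ card_realizablePartitions_le_treePi Tr ab.2 (S \ A)
    _ = _ := by ring
  obtain ⟨hQ₁, hQ₂⟩ := mem_product.1 hQ
  have h₁ := (mem_realizablePartitions.1 hQ₁).1.1
  have h₂ := (mem_realizablePartitions.1 hQ₂).1.1
  refine (card_matchings_le _ _ _).trans_eq ?_
  rw [h₁, h₂]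
  exact choose_mul_descFactorial_eq (mem_Icc.1 ha).2 (mem_Icc.1 hb).2 hc

end Codes

theorem tree_partitioning_recursive_upper_bound_general
    (ℓ : ℕ) (Tl Tr : TreeStruct) (c m : ℕ)
    (hm : (TreeStruct.node Tl Tr).leaves < m) :
    ((2 : ℕ) ^ (if Tl = Tr then 1 else 0)) * treePi ℓ (TreeStruct.node Tl Tr) c m ≤
      ∑ k ∈ Finset.Icc Tl.leaves (m - Tr.leaves),
        min (2 * ℓ) (m.choose k) *
          ∑ p ∈ (Finset.Icc 1 c ×ˢ Finset.Icc 1 c).filter (fun p => c ≤ p.1 + p.2),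
            p.1.choose (c - p.2) * p.2.choose (c - p.1) * (p.1 + p.2 - c).factorial *
              treePi ℓ Tl p.1 k * treePi ℓ Tr p.2 (m - k) := by
  refine mul_treePi_le fun S hS => ?_
  obtain ⟨S', hcard, hgen, hle⟩ := exists_isGeneric_card_le (.node Tl Tr) c S
  rw [← hS, ← hcard]
  calc _ ≤ 2 ^ (if Tl = Tr then 1 else 0) * #(realizablePartitions ℓ (.node Tl Tr) c S') :=
        Nat.mul_le_mul_left _ hle
    _ ≤ #(splitCodes ℓ Tl Tr c S') := two_pow_mul_card_le_card_splitCodes hgen (hcard ▸ hS ▸ hm.le)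
    _ ≤ _ := card_splitCodes_le Tl Tr c S'

theorem tree_partitioning_recursive_upper_bound
    (ℓ : ℕ) (hℓ : 1 ≤ ℓ) (Tl Tr : TreeStruct) (c m : ℕ) (hc : 1 ≤ c)
    (hm : (TreeStruct.node Tl Tr).leaves < m) :
    ((2 : ℕ) ^ (if Tl = Tr then 1 else 0)) * treePi ℓ (TreeStruct.node Tl Tr) c m ≤
      ∑ k ∈ Finset.Icc Tl.leaves (m - Tr.leaves),
        min (2 * ℓ) (m.choose k) *
          ∑ p ∈ (Finset.Icc 1 c ×ˢ Finset.Icc 1 c).filter (fun p => c ≤ p.1 + p.2),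
            p.1.choose (c - p.2) * p.2.choose (c - p.1) * (p.1 + p.2 - c).factorial *
              treePi ℓ Tl p.1 k * treePi ℓ Tr p.2 (m - k) :=
  tree_partitioning_recursive_upper_bound_general ℓ Tl Tr c m hm
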